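/- For fixed p ∈ (0, 1/2), the function q ↦ H_b(q * p) − H_b(q) is nonincreasing on [0, 1/2], attaining its maximum value H_b(p) at q = 0 and its minimum value 0 at q = 1/2. -/

import Mathlib

/-- Binary convolution (star operator): `q * p = q(1-p) + (1-q)p`. -/
def starOp (q p : ℝ) : ℝ := q * (1 - p) + (1 - q) * p

/-- The binary entropy function `H_b(x) = -x log₂ x - (1-x) log₂ (1-x)`. -/
noncomputable def binEnt (x : ℝ) : ℝ :=
  -(x * Real.logb 2 x) - (1 - x) * Real.logb 2 (1 - x)

/-!
Up to the factor `1 / log 2`, the derivative of `q ↦ H(q * p) - H(q)` is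
`(1 - 2p) L(q * p) - L(q)`, where `L x = log (1 - x) - log x` is the derivative of the binary
entropy. For `p, q ∈ [0, 1/2]` the point `q * p` lies between `q` and `1/2`, where `L` is
nonnegative and antitone, so `(1 - 2p) L(q * p) ≤ L(q * p) ≤ L(q)`.
-/

open Real Set

lemma binEnt_eq_binEntropy_div (x : ℝ) : binEnt x = binEntropy x / log 2 := by
  unfold binEnt binEntropy logb
  rw [log_inv, log_inv]
  ring

section StarOp

variable {p q : ℝ}

lemma starOp_zero_left (p : ℝ) : starOp 0 p = p := by
  unfold starOp; ring

lemma starOp_half_left (p : ℝ) : starOp (1 / 2) p = 1 / 2 := by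
  unfold starOp; ring

lemma hasDerivAt_starOp_left (p q : ℝ) : HasDerivAt (fun q => starOp q p) (1 - 2 * p) q := by
  have h := ((hasDerivAt_id q).mul_const (1 - p)).add
    (((hasDerivAt_const q (1 : ℝ)).sub (hasDerivAt_id q)).mul_const p)
  exact h.congr_deriv (by ring)

lemma starOp_mem_Icc (hp : p ∈ Icc (0 : ℝ) (1 / 2)) (hq : q ≤ 1 / 2) :
    starOp q p ∈ Icc q (1 / 2) := by
  obtain ⟨hp₀, hp₂⟩ := hp
  unfold starOp
  constructor <;> nlinarith

end StarOp

section LogOdds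

variable {x y : ℝ}

lemma log_one_sub_sub_log_nonneg (hx₀ : 0 < x) (hx : x ≤ 1 / 2) : 0 ≤ log (1 - x) - log x :=
  sub_nonneg.mpr (log_le_log hx₀ (by linarith))

lemma log_one_sub_sub_log_le_of_le (hx₀ : 0 < x) (hxy : x ≤ y) (hy₁ : y < 1) :
    log (1 - y) - log y ≤ log (1 - x) - log x := by
  have h₁ := log_le_log (by linarith : (0 : ℝ) < 1 - y) (by linarith : 1 - y ≤ 1 - x)
  have h₂ := log_le_log hx₀ hxy
  linarith

end LogOdds

lemma hasDerivAt_binEntropy_starOp_sub {p q : ℝ} (hq₀ : 0 < q) (hq₁ : q < 1)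
    (hs₀ : 0 < starOp q p) (hs₁ : starOp q p < 1) :
    HasDerivAt (fun q => binEntropy (starOp q p) - binEntropy q)
      ((1 - 2 * p) * (log (1 - starOp q p) - log (starOp q p)) - (log (1 - q) - log q)) q := by
  have hs := (hasDerivAt_binEntropy hs₀.ne' hs₁.ne).comp q (hasDerivAt_starOp_left p q)
  have hq := hasDerivAt_binEntropy hq₀.ne' hq₁.ne
  exact (hs.sub hq).congr_deriv (by ring)

theorem antitoneOn_binEntropy_starOp_sub {p : ℝ} (hp : p ∈ Icc (0 : ℝ) (1 / 2)) :
    AntitoneOn (fun q => binEntropy (starOp q p) - binEntropy q) (Icc 0 (1 / 2)) := by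
  have hcont : Continuous fun q => starOp q p := by unfold starOp; fun_prop
  refine antitoneOn_of_hasDerivWithinAt_nonpos (convex_Icc _ _) (f' := fun q =>
      (1 - 2 * p) * (log (1 - starOp q p) - log (starOp q p)) - (log (1 - q) - log q))
    ((binEntropy_continuous.comp hcont).sub binEntropy_continuous).continuousOn
    ?_ ?_ <;> rw [interior_Icc] <;> rintro q ⟨hq₀, hq₂⟩ <;>
    obtain ⟨hqs, hs₂⟩ := starOp_mem_Icc hp hq₂.le
  · exact (hasDerivAt_binEntropy_starOp_sub hq₀ (by linarith) (by linarith)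
      (by linarith)).hasDerivWithinAt
  · have hLs := log_one_sub_sub_log_nonneg (hq₀.trans_le hqs) hs₂
    have hLsq := log_one_sub_sub_log_le_of_le hq₀ hqs (by linarith)
    nlinarith [mul_nonneg hp.1 hLs]

/-- For fixed `p ∈ (0, 1/2)`, the map `q ↦ H_b(q*p) − H_b(q)` is nonincreasing on
`[0, 1/2]`, attains its maximum value `H_b(p)` at `q = 0`, and its minimum value `0`
at `q = 1/2`. -/
theorem binEnt_starOp_sub_antitoneOn (p : ℝ) (hp : p ∈ Set.Ioo (0 : ℝ) (1 / 2)) :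
    AntitoneOn (fun q => binEnt (starOp q p) - binEnt q) (Set.Icc (0 : ℝ) (1 / 2)) ∧
      binEnt (starOp 0 p) - binEnt 0 = binEnt p ∧
      binEnt (starOp (1 / 2) p) - binEnt (1 / 2) = 0 := by
  refine ⟨fun a ha b hb hab => ?_, ?_, ?_⟩
  · simp only [binEnt_eq_binEntropy_div, ← sub_div]
    exact div_le_div_of_nonneg_right (antitoneOn_binEntropy_starOp_sub (Ioo_subset_Icc_self hp)
      ha hb hab) (log_pos one_lt_two).le
  · rw [starOp_zero_left]
    simp [binEnt]
  · rw [starOp_half_left, sub_self]
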